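/- For the information system with universe ℤ and attribute set containing all functions ℤ → {0,1} vanishing on the positive integers together with the functions p_i and l_{2^i} (which vanish on non-positive integers), the set B = {2^r + m, 2^r + m + 1, …, 2^{r+1}} (for r,m ∈ ℕ with m ≤ 2^r) is an (m+3)-definable set, and every m-definable subset of B is a singleton; hence B is not a union of fewer than 2^r − m + 1 m-definable sets. -/

import Mathlib

/-- The attribute `p i` on the universe `ℤ`: `p i a = 1` iff `a = i`. -/
def p (i : ℕ) (a : ℤ) : Bool := decide (a = (i : ℤ))

/-- The attribute `l_{2^i}` on the universe `ℤ`: `lpow i a = 1` iff `a > 2^i`. -/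
def lpow (i : ℕ) (a : ℤ) : Bool := decide ((2 ^ i : ℤ) < a)

/-- The attribute set `F₇ = {p_i} ∪ {l_{2^i}} ∪ F₀`, where `F₀` is the set of all functions
`ℤ → {0,1}` vanishing on the positive integers. -/
def F : Set (ℤ → Bool) :=
  Set.range p ∪ Set.range lpow ∪ {f | ∀ a : ℤ, 0 < a → f a = false}

/-- `B` is an `m`-definable set of the information system with universe `A`
and attribute set `F`. -/
def Definable {A : Type*} (F : Set (A → Bool)) (m : ℕ) (B : Set A) : Prop :=
  B.Nonempty ∧ ∃ f : Fin m → A → Bool, ∃ δ : Fin m → Bool,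
    (∀ i, f i ∈ F) ∧ B = {a | ∀ i, f i a = δ i}

/-!
For `a₀ ∈ B`, an attribute in `F` either pins down `a₀` (an equation `p_v(x) = 1`) or, among the
`m + 1` points `2^r, …, 2^r + m - 1, 2^{r+1} + 1` outside `B`, separates at most one from `a₀`:
`p_v(x) = 0` excludes only `v`, `l_{2^i}` with `2^i < a₀ ≤ 2^{r+1}` has `2^i ≤ 2^r` and excludes
only `2^r`, `l_{2^i}` with `a₀ ≤ 2^i` excludes only `2^{r+1} + 1`, and functions of `F₀` are
constant on the positive integers. So `m` equations cannot cut a subset of `B` out of `ℤ` unless one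
of them is `p_v(x) = 1`, and a cover of `B` by `m`-definable sets is a cover by singletons.
-/

open Finset

theorem Definable.of_fintype {A ι : Type*} [Fintype ι] [Nonempty ι] {F : Set (A → Bool)}
    {m : ℕ} {B : Set A} (hB : B.Nonempty) (hι : Fintype.card ι ≤ m) (f : ι → A → Bool)
    (δ : ι → Bool) (hf : ∀ i, f i ∈ F) (hBf : B = {a | ∀ i, f i a = δ i}) :
    Definable F m B := by
  obtain ⟨e⟩ : Nonempty (ι ↪ Fin m) := Function.Embedding.nonempty_of_card_le (by simpa)
  have hσ : Function.Surjective (Function.invFun e) := Function.invFun_surjective e.injective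
  refine ⟨hB, f ∘ Function.invFun e, δ ∘ Function.invFun e, fun j => hf _, ?_⟩
  rw [hBf]
  ext a
  exact ⟨fun h j => h _, fun h i => by obtain ⟨j, rfl⟩ := hσ i; exact h j⟩

theorem add_natCast_le_iff_forall_ne {c a : ℤ} {m : ℕ} (hm : 1 ≤ m) :
    c + m ≤ a ↔ c < a ∧ ∀ b : Fin m, a ≠ c + (b : ℕ) := by
  refine ⟨fun h => ⟨by omega, fun b => by have := b.isLt; omega⟩, fun ⟨hca, hne⟩ => ?_⟩
  by_contra! h
  exact hne ⟨(a - c).toNat, by omega⟩ (by simp only [Int.ofNat_toNat]; omega)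

theorem definable_Icc_two_pow {r m : ℕ} (hm : 1 ≤ m) (hmr : m ≤ 2 ^ r) :
    Definable F (m + 3) (Set.Icc (2 ^ r + m : ℤ) (2 ^ (r + 1))) := by
  have h2r : (2 : ℤ) ^ (r + 1) = 2 ^ r + 2 ^ r := by ring
  have hmr' : (m : ℤ) ≤ 2 ^ r := by exact_mod_cast hmr
  -- `l_{2^r}(x) = 1` and `l_{2^{r+1}}(x) = 0` indexed by `Bool`, then `p_{2^r+n}(x) = 0` for `n < m`.
  refine Definable.of_fintype (ι := Bool ⊕ Fin m) ⟨2 ^ (r + 1), by rw [h2r]; linarith, le_rfl⟩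
    (by simp only [Fintype.card_sum, Fintype.card_bool, Fintype.card_fin]; omega)
    (Sum.elim (fun b => lpow (if b then r else r + 1)) fun n => p (2 ^ r + n))
    (Sum.elim id fun _ => false) ?_ ?_
  · rintro (_ | _) <;> simp [F]
  · ext a
    simp only [Set.mem_Icc, Set.mem_ofPred_eq, Sum.forall, Sum.elim_inl, Sum.elim_inr,
      Bool.forall_bool, lpow, p, add_natCast_le_iff_forall_ne hm, ne_eq, Bool.false_eq_true,
      ↓reduceIte, id_eq, decide_eq_false_iff_not, not_lt, decide_eq_true_eq, Nat.cast_add,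
      Nat.cast_pow, Nat.cast_ofNat]
    tauto

noncomputable def testPoints (r m : ℕ) : Finset ℤ :=
  insert (2 ^ (r + 1) + 1) (Ico (2 ^ r) (2 ^ r + m))

theorem mem_testPoints {r m : ℕ} {t : ℤ} :
    t ∈ testPoints r m ↔ t = 2 ^ (r + 1) + 1 ∨ 2 ^ r ≤ t ∧ t < 2 ^ r + m := by
  simp [testPoints]

theorem card_testPoints {r m : ℕ} (hmr : m ≤ 2 ^ r) : #(testPoints r m) = m + 1 := by
  have hmr' : (m : ℤ) ≤ 2 ^ r := by exact_mod_cast hmr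
  have h2r : (2 : ℤ) ^ (r + 1) = 2 ^ r + 2 ^ r := by ring
  have hbig : 2 ^ (r + 1) + 1 ∉ Ico (2 ^ r : ℤ) (2 ^ r + m) := by
    simp only [mem_Ico, not_and, not_lt]
    omega
  rw [testPoints, card_insert_of_notMem hbig, Int.card_Ico]
  omega

theorem notMem_Icc_of_mem_testPoints {r m : ℕ} {t : ℤ} (ht : t ∈ testPoints r m) :
    t ∉ Set.Icc (2 ^ r + m : ℤ) (2 ^ (r + 1)) := by
  rw [mem_testPoints] at ht
  simp only [Set.mem_Icc, not_and_or, not_le]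
  omega

theorem card_filter_testPoints_ne_le_one {r m : ℕ} {f : ℤ → Bool} (hf : f ∈ F) {a₀ : ℤ}
    (ha₀ : a₀ ∈ Set.Icc (2 ^ r + m : ℤ) (2 ^ (r + 1))) (hp : ∀ v, f = p v → f a₀ = false) :
    #{t ∈ testPoints r m | f t ≠ f a₀} ≤ 1 := by
  obtain ⟨hlo, hhi⟩ := ha₀
  have h2r : (2 : ℤ) ^ (r + 1) = 2 ^ r + 2 ^ r := by ring
  have hpos : (0 : ℤ) < 2 ^ r := by positivity
  simp only [card_le_one_iff_subset_singleton, subset_iff, mem_filter, mem_testPoints,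
    mem_singleton]
  rcases hf with (⟨v, rfl⟩ | ⟨i, rfl⟩) | hF₀
  · refine ⟨v, fun t ⟨_, ht⟩ => ?_⟩
    have hv : a₀ ≠ v := by simpa [p] using hp v rfl
    simpa [p, hv] using ht
  · by_cases hi : (2 : ℤ) ^ i < a₀
    · have hir : (2 : ℤ) ^ i ≤ 2 ^ r := by
        have : i < r + 1 := (pow_lt_pow_iff_right₀ one_lt_two).mp (hi.trans_le hhi)
        exact pow_le_pow_right₀ one_le_two (by omega)
      refine ⟨2 ^ r, fun t ⟨htT, ht⟩ => ?_⟩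
      simp only [lpow, hi, decide_true, ne_eq, decide_eq_true_eq, not_lt] at ht
      omega
    · refine ⟨2 ^ (r + 1) + 1, fun t ⟨htT, ht⟩ => ?_⟩
      simp only [lpow, hi, decide_false, ne_eq, decide_eq_false_iff_not, not_lt, not_le] at ht
      omega
  · refine ⟨0, fun t ⟨htT, ht⟩ => absurd ?_ ht⟩
    rw [Set.mem_ofPred_eq] at hF₀
    rw [hF₀ t (by omega), hF₀ a₀ (by omega)]

theorem exists_eq_singleton_of_definable_subset_Icc {r m : ℕ} (hmr : m ≤ 2 ^ r) {C : Set ℤ}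
    (hC : Definable F m C) (hCB : C ⊆ Set.Icc (2 ^ r + m : ℤ) (2 ^ (r + 1))) :
    ∃ a, C = {a} := by
  obtain ⟨⟨a₀, ha₀⟩, f, δ, hfF, rfl⟩ := hC
  by_cases hp : ∃ k v, f k = p v ∧ δ k = true
  · obtain ⟨k, v, hk, hδk⟩ := hp
    refine ⟨v, (Set.Nonempty.subset_singleton_iff ⟨a₀, ha₀⟩).mp fun x hx => ?_⟩
    simpa [hk, hδk, p] using hx k
  · push Not at hp
    have hcover : testPoints r m ⊆
        univ.biUnion fun k => {t ∈ testPoints r m | f k t ≠ f k a₀} := by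
      intro t ht
      obtain ⟨k, hk⟩ : ∃ k, f k t ≠ δ k := by
        by_contra! h
        exact notMem_Icc_of_mem_testPoints ht (hCB h)
      simp only [mem_biUnion, mem_univ, mem_filter, true_and]
      exact ⟨k, ht, by rwa [ha₀ k]⟩
    have hcard := (card_le_card hcover).trans <|
      card_biUnion_le_card_mul _ _ 1 fun k _ => card_filter_testPoints_ne_le_one (hfF k)
        (hCB ha₀) fun v hv => by simpa [ha₀ k] using hp k v hv
    simp [card_testPoints hmr] at hcard

theorem card_Icc_two_pow {r m : ℕ} (hmr : m ≤ 2 ^ r) :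
    #(Icc (2 ^ r + m : ℤ) (2 ^ (r + 1))) = 2 ^ r - m + 1 := by
  have hcast : ((2 ^ r : ℕ) : ℤ) = 2 ^ r := by push_cast; rfl
  rw [Int.card_Icc, pow_succ]
  omega

theorem stmt_11 (r m : ℕ) (hm : 1 ≤ m) (hmr : m ≤ 2 ^ r)
    (B : Set ℤ) (hB : B = {a : ℤ | (2 ^ r + m : ℤ) ≤ a ∧ a ≤ (2 ^ (r + 1) : ℤ)}) :
    Definable F (m + 3) B ∧
    (∀ C : Set ℤ, Definable F m C → C ⊆ B → ∃ a : ℤ, C = {a}) ∧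
    (∀ k : ℕ, ∀ D : Fin k → Set ℤ, (∀ i, Definable F m (D i)) → B = ⋃ i, D i →
      2 ^ r - m + 1 ≤ k) := by
  replace hB : B = Set.Icc (2 ^ r + m : ℤ) (2 ^ (r + 1)) := hB
  subst hB
  refine ⟨definable_Icc_two_pow hm hmr,
    fun C hC hCB => exists_eq_singleton_of_definable_subset_Icc hmr hC hCB, fun k D hD hBD => ?_⟩
  choose a ha using fun i =>
    exists_eq_singleton_of_definable_subset_Icc hmr (hD i) (hBD ▸ Set.subset_iUnion D i)
  have hIcc : Icc (2 ^ r + m : ℤ) (2 ^ (r + 1)) = univ.image a := by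
    rw [← coe_inj, coe_Icc, hBD]
    simp [ha, Set.iUnion_singleton_eq_range]
  rw [← card_Icc_two_pow hmr, hIcc]
  exact card_image_le.trans (card_fin k).le
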